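/- arXiv:2210.07307 — 2 statements merged into one kernel-verified Lean document; each statement's English description precedes it below -/
import Mathlib

section
/- For 0 ≤ a < b ≤ c < d: θ ∫_0^a φ(a - x; e^{-(b-a)} · φ(c-b; e^{-(d-c)})) dx = θ log((e^d - e^c + e^b)/(e^d - e^c + e^b - e^a + 1)), where φ(t;s) = e^{-t}s/(1-(1-e^{-t})s). -/
open Real intervalIntegral

/-! The integrand is `φ(a - x; s)` with the constant `s = e^{-(b-a)} φ(c-b; e^{-(d-c)})`,
which simplifies to `e^a / (e^d - e^c + e^b)`. Since `φ(t; s) = s e^{-t} / (1 - s + s e^{-t})`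
is the derivative of `t ↦ -log (1 - s + s e^{-t})`, the integral over `[0, a]` equals
`-log (1 - s + s e^{-a})`, which is the claimed logarithm. -/

/-- The generating function `φ(t; s)` of a Yule process of rate one at time `t`. -/
noncomputable def yuleGF (t s : ℝ) : ℝ :=
  exp (-t) * s / (1 - (1 - exp (-t)) * s)

theorem yuleGF_sub_exp_neg_sub (b c d : ℝ) :
    yuleGF (c - b) (exp (-(d - c))) = exp b / (exp d - exp c + exp b) := by
  have hden : 1 - (1 - exp (-(c - b))) * exp (-(d - c)) =
      (exp d - exp c + exp b) / exp d := by
    simp only [neg_sub, exp_sub]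
    field_simp
    ring
  rw [yuleGF, hden, div_div_eq_mul_div, neg_sub, neg_sub, ← exp_add, ← exp_add]
  ring_nf

theorem one_sub_one_sub_exp_neg_mul_pos {s : ℝ} (hs0 : 0 ≤ s) (hs1 : s ≤ 1) (t : ℝ) :
    0 < 1 - (1 - exp (-t)) * s := by
  have := exp_pos (-t)
  rcases hs0.lt_or_eq with hs | rfl
  · nlinarith
  · simp

theorem hasDerivAt_neg_log_one_sub_add_mul_exp_neg {s : ℝ} (hs0 : 0 ≤ s) (hs1 : s ≤ 1)
    (t : ℝ) : HasDerivAt (fun u => -log (1 - s + s * exp (-u))) (yuleGF t s) t := by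
  have hpos : 1 - s + s * exp (-t) ≠ 0 := by
    have := one_sub_one_sub_exp_neg_mul_pos hs0 hs1 t
    linarith
  have hinner : HasDerivAt (fun u => 1 - s + s * exp (-u)) (-(s * exp (-t))) t := by
    simpa using (((hasDerivAt_neg t).exp).const_mul s).const_add (1 - s)
  refine (hinner.log hpos).neg.congr_deriv ?_
  rw [yuleGF, show 1 - (1 - exp (-t)) * s = 1 - s + s * exp (-t) by ring]
  ring

theorem integral_yuleGF {s : ℝ} (hs0 : 0 ≤ s) (hs1 : s ≤ 1) (a : ℝ) :
    ∫ t in (0 : ℝ)..a, yuleGF t s = -log (1 - s + s * exp (-a)) := by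
  have hcont : Continuous fun t => yuleGF t s :=
    Continuous.div (by fun_prop) (by fun_prop)
      fun t => (one_sub_one_sub_exp_neg_mul_pos hs0 hs1 t).ne'
  rw [integral_eq_sub_of_hasDerivAt
    (fun t _ => hasDerivAt_neg_log_one_sub_add_mul_exp_neg hs0 hs1 t)
    (hcont.intervalIntegrable 0 a)]
  simp

theorem mean_unobservable_two_general (θ a b c d : ℝ) (hab : a < b)
    (hcd : c < d) :
    θ * ∫ x in (0:ℝ)..a,
        Real.exp (-(a - x)) *
            (Real.exp (-(b - a)) *
              (Real.exp (-(c - b)) * Real.exp (-(d - c)) /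
                (1 - (1 - Real.exp (-(c - b))) * Real.exp (-(d - c))))) /
          (1 - (1 - Real.exp (-(a - x))) *
            (Real.exp (-(b - a)) *
              (Real.exp (-(c - b)) * Real.exp (-(d - c)) /
                (1 - (1 - Real.exp (-(c - b))) * Real.exp (-(d - c)))))) =
      θ * Real.log ((Real.exp d - Real.exp c + Real.exp b) /
        (Real.exp d - Real.exp c + Real.exp b - Real.exp a + 1)) := by
  set E := exp d - exp c + exp b with hE_def
  have haE : exp a < E := by
    have := exp_lt_exp.mpr hab
    have := exp_lt_exp.mpr hcd
    linarith
  have hE : 0 < E := (exp_pos a).trans haE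
  have hs : exp (-(b - a)) * yuleGF (c - b) (exp (-(d - c))) = exp a / E := by
    rw [yuleGF_sub_exp_neg_sub, ← hE_def, neg_sub, exp_sub]
    field_simp
  change θ * ∫ x in (0:ℝ)..a, yuleGF (a - x) (exp (-(b - a)) * yuleGF (c - b) (exp (-(d - c))))
    = _
  rw [hs, integral_comp_sub_left (fun t => yuleGF t (exp a / E)), sub_self, sub_zero,
    integral_yuleGF (by positivity) ((div_le_one hE).mpr haE.le), ← log_inv]
  congr 2
  rw [exp_neg]
  field_simp

/-- Mean number of families initiated in `(0,a)` unobservable in both `(a,b)` and `(c,d)`: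
`θ ∫_0^a φ(a-x; e^{-(b-a)} φ(c-b; e^{-(d-c)})) dx
   = θ log((e^d-e^c+e^b)/(e^d-e^c+e^b-e^a+1))`. -/
theorem mean_unobservable_two (θ a b c d : ℝ) (hθ : 0 < θ) (ha : 0 ≤ a) (hab : a < b)
    (hbc : b ≤ c) (hcd : c < d) :
    θ * ∫ x in (0:ℝ)..a,
        Real.exp (-(a - x)) *
            (Real.exp (-(b - a)) *
              (Real.exp (-(c - b)) * Real.exp (-(d - c)) /
                (1 - (1 - Real.exp (-(c - b))) * Real.exp (-(d - c))))) /
          (1 - (1 - Real.exp (-(a - x))) *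
            (Real.exp (-(b - a)) *
              (Real.exp (-(c - b)) * Real.exp (-(d - c)) /
                (1 - (1 - Real.exp (-(c - b))) * Real.exp (-(d - c)))))) =
      θ * Real.log ((Real.exp d - Real.exp c + Real.exp b) /
        (Real.exp d - Real.exp c + Real.exp b - Real.exp a + 1)) :=
  mean_unobservable_two_general θ a b c d hab hcd
end

section
/- For fixed γ > 0 and θ > 0, in the logarithmically-equal-length setting the Watterson-type estimator θ_S = S̄/log(1+γ) built from p identically distributed Poisson counts S_1,...,S_p with mean θ log(1+γ) and pairwise covariance θ log((1+γ)²/(2γ+1)) satisfies Var θ_S = (θ/(p log(γ+1)))(1 + (p−1)ρ) with ρ = 2 − log(2γ+1)/log(γ+1), and Var θ_S → θρ/log(γ+1) > 0 as p → ∞; hence θ_S is not consistent. -/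
open Real Filter

/-- The Watterson-type estimator `θ_S = S̄/log(1+γ)` has variance
`Var θ_S = (θ/(p log(γ+1)))(1+(p-1)ρ)` with `ρ = 2 - log(2γ+1)/log(γ+1)`, which
converges to `θρ/log(γ+1) > 0` as `p → ∞`; hence `θ_S` is not consistent. -/
theorem watterson_not_consistent (θ γ : ℝ) (hθ : 0 < θ) (hγ : 0 < γ) :
    (∀ p : ℕ, 2 ≤ p →
        ((θ * Real.log (1 + γ)) / p) *
            (1 + ((p : ℝ) - 1) * (2 - Real.log (2 * γ + 1) / Real.log (γ + 1))) /
            (Real.log (1 + γ)) ^ 2 =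
          (θ / ((p : ℝ) * Real.log (γ + 1))) *
            (1 + ((p : ℝ) - 1) * (2 - Real.log (2 * γ + 1) / Real.log (γ + 1)))) ∧
      Filter.Tendsto (fun p : ℕ =>
          (θ / ((p : ℝ) * Real.log (γ + 1))) *
            (1 + ((p : ℝ) - 1) * (2 - Real.log (2 * γ + 1) / Real.log (γ + 1))))
        Filter.atTop
        (nhds (θ * (2 - Real.log (2 * γ + 1) / Real.log (γ + 1)) / Real.log (γ + 1))) ∧
      0 < θ * (2 - Real.log (2 * γ + 1) / Real.log (γ + 1)) / Real.log (γ + 1) := by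
  have hL : 0 < Real.log (γ + 1) := Real.log_pos (by linarith)
  have hL' : Real.log (1 + γ) = Real.log (γ + 1) := by ring_nf
  set L := Real.log (γ + 1) with hLdef
  set ρ : ℝ := 2 - Real.log (2 * γ + 1) / L with hρ
  have hρpos : 0 < ρ := by
    have h2 : Real.log (2 * γ + 1) < 2 * L := by
      have : Real.log (2 * γ + 1) < Real.log ((γ + 1) ^ 2) :=
        Real.log_lt_log (by linarith) (by nlinarith)
      rwa [Real.log_pow, Nat.cast_ofNat] at this
    rw [hρ, sub_pos, div_lt_iff₀ hL]
    linarith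
  refine ⟨?_, ?_, ?_⟩
  · intro p hp
    have hp0 : (p : ℝ) ≠ 0 := by positivity
    rw [hL']
    field_simp
  · have heq : ∀ᶠ p : ℕ in atTop,
        θ * ρ / L + θ * (1 - ρ) / L * (1 / (p : ℝ)) =
          (θ / ((p : ℝ) * L)) * (1 + ((p : ℝ) - 1) * ρ) := by
      filter_upwards [eventually_ge_atTop 1] with p hp
      have hp0 : (p : ℝ) ≠ 0 := by positivity
      field_simp
      ring
    refine Tendsto.congr' heq ?_
    have : Filter.Tendsto (fun p : ℕ => θ * (1 - ρ) / L * (1 / (p : ℝ))) atTop (nhds 0) := by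
      simpa using (tendsto_one_div_atTop_nhds_zero_nat.const_mul (θ * (1 - ρ) / L))
    simpa using (tendsto_const_nhds.add this)
  · positivity
end
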